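/- Let T be a nice triple and define T_0 = T, T_{k+1} = T_k⊗T_k for k ≥ 0. Then for every k ≥ 0: α(T_k) = α(T)+k; β(T_k) = 2^k·β(T)+2^k−1; δ(T_k) = 2^k·β(T)+α(T)+2^k+k−1; g(T_k) = 2^k·g(T); and n(T_k) = 2^k·n(T) + ((4^k−2^k)/2)·g(T)². Moreover, if g(T) = β(T)+1, then g(T_k) = β(T_k)+1 for every k ≥ 0. -/
import Mathlib


/-- The three-letter alphabet `S = {0, 1, ∗}`. -/
inductive Tern | zero | one | star
deriving DecidableEq, Repr

/-- A string over `S`. -/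
abbrev Str := List Tern

/-- A (ordered) list of strings over `S`. -/
abbrev SList := List Str

/-- `clash x y` is true iff both `x, y ∈ {0,1}` and `x ≠ y`. -/
def clash : Tern → Tern → Bool
  | Tern.zero, Tern.one => true
  | Tern.one, Tern.zero => true
  | _, _ => false

/-- `dist u v`: the number of positions where both letters are binary and differ. -/
def distS (u v : Str) : ℕ := (u.zip v).countP (fun p => clash p.1 p.2)

/-- all strings of a list have length `m` -/
def uniform (L : SList) (m : ℕ) : Prop := ∀ s ∈ L, s.length = m

/-- A list is `k`-neighborly if any two entries occupying distinct positions `u, v`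
satisfy `1 ≤ dist(u,v) ≤ k`. -/
def kNbr (k : ℕ) (L : SList) : Prop :=
  L.Pairwise (fun u v => 1 ≤ distS u v ∧ distS u v ≤ k)

/-- The pairing `A ⊖ B`: entrywise concatenation of strings. -/
def pairL (A B : SList) : SList := List.zipWith (· ++ ·) A B

/-- The concatenation `AB = [v_i w_j]`, ordered lexicographically in `(i,j)`. -/
def concL (A B : SList) : SList := A.flatMap (fun u => B.map (fun v => u ++ v))

/-- the string `∗^m` of `m` jokers -/
def stars (m : ℕ) : Str := List.replicate m Tern.star

/-- A triple of lists `T = (A,B,C)` together with the (intended common) string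
lengths `a` of the entries of `A` and `b` of the entries of `B` (and `C`). -/
structure Triple where
  a : ℕ
  b : ℕ
  A : SList
  B : SList
  C : SList

namespace Triple

/-- `α(T)`: the common length of the strings of `A`. -/
def alpha (T : Triple) : ℕ := T.a

/-- `β(T)`: the common length of the strings of `B`. -/
def beta (T : Triple) : ℕ := T.b

/-- `δ(T) = α(T) + β(T)`. -/
def delta (T : Triple) : ℕ := T.a + T.b

/-- `n(T) = |A|`. -/
def nT (T : Triple) : ℕ := T.A.length

/-- `g(T) = |C|`. -/
def gT (T : Triple) : ℕ := T.C.length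

/-- A triple `T = (A,B,C)` is nice if: (1) `dist(u,v) ≤ 1` for all entries `u,v` of `A`;
(2) `|A| = |B|` and `A ⊖ B` is 2-neighborly; (3) `C` is a 1-neighborly sublist of `B`,
and `dist(u,v) ≤ 1` for every entry `u` of `B` and every entry `v` of `C`.
(The strings of `A` all have length `α(T)` and those of `B` length `β(T)`.) -/
def Nice (T : Triple) : Prop :=
  uniform T.A T.a ∧ uniform T.B T.b ∧
  (∀ u ∈ T.A, ∀ v ∈ T.A, distS u v ≤ 1) ∧
  T.A.length = T.B.length ∧
  kNbr 2 (pairL T.A T.B) ∧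
  T.C.Sublist T.B ∧ kNbr 1 T.C ∧
  (∀ u ∈ T.B, ∀ v ∈ T.C, distS u v ≤ 1)

/-- `T, T'` are concordant if `α(T) = α(T')` and `dist(u,v) ≤ 1` for all entries
`u, v` of `A + A'`. -/
def Concordant (T T' : Triple) : Prop :=
  T.a = T'.a ∧ ∀ u ∈ T.A ++ T'.A, ∀ v ∈ T.A ++ T'.A, distS u v ≤ 1

/-- The compound `T ⊗ T' = (A'', B'', C'')` where
`A'' = [0]A + [0]A' + (|C|·|C'|)·([1][∗^{α(T)}])`,
`B'' = [0]B[∗^{β(T')}] + [1][∗^{β(T)}]B' + [∗]CC'`,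
`C'' = [0]C[∗^{β(T')}] + [1][∗^{β(T)}]C'`. -/
def compound (T T' : Triple) : Triple where
  a := T.a + 1
  b := T.b + T'.b + 1
  A := (T.A.map (fun u => Tern.zero :: u)) ++ (T'.A.map (fun u => Tern.zero :: u)) ++
       List.replicate (T.C.length * T'.C.length) (Tern.one :: stars T.a)
  B := (T.B.map (fun u => Tern.zero :: (u ++ stars T'.b))) ++
       (T'.B.map (fun u => Tern.one :: (stars T.b ++ u))) ++
       ((concL T.C T'.C).map (fun u => Tern.star :: u))
  C := (T.C.map (fun u => Tern.zero :: (u ++ stars T'.b))) ++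
       (T'.C.map (fun u => Tern.one :: (stars T.b ++ u)))

/-- `T, T'` are congruent if they are concordant, `β(T) = β(T')`, `n(T) = n(T')`
and `g(T) = g(T')`. -/
def Congruent (T T' : Triple) : Prop :=
  Concordant T T' ∧ T.b = T'.b ∧ T.A.length = T'.A.length ∧ T.C.length = T'.C.length

end Triple

namespace Triple

/-- the iterates `T_0 = T`, `T_{k+1} = T_k ⊗ T_k` -/
def iterT (T : Triple) : ℕ → Triple
  | 0 => T
  | k + 1 => compound (iterT T k) (iterT T k)

end Triple


open Triple in
private lemma compound_params (T T' : Triple) :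
    alpha (compound T T') = alpha T + 1 ∧
    beta (compound T T') = beta T + beta T' + 1 ∧
    gT (compound T T') = gT T + gT T' ∧
    nT (compound T T') = nT T + nT T' + gT T * gT T' := by
  refine ⟨rfl, rfl, ?_, ?_⟩
  · simp [compound, gT]
  · simp [compound, nT, gT]; ring

private lemma pow_sq_two (k : ℕ) : (2:ℕ)^k * 2^k = 4^k := by
  rw [← pow_add, show (4:ℕ) = 2^2 from rfl, ← pow_mul]; ring_nf

private lemma halve_step (k : ℕ) :
    (4^(k+1) - 2^(k+1)) / 2 = 2 * ((4^k - 2^k) / 2) + 4^k := by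
  have h1 : (2:ℕ)^k * 2^k = 4^k := pow_sq_two k
  have h2 : (1:ℕ) ≤ 2^k := Nat.one_le_two_pow
  have h3 : 4^(k+1) = 4 * 4^k := by ring
  have h4 : 2^(k+1) = 2 * 2^k := by ring
  have h5 : 2^k ≤ 4^k := Nat.pow_le_pow_left (by norm_num) k
  have h6 : Even (4^k - 2^k) := by
    rw [Nat.even_sub h5, Nat.even_pow, Nat.even_pow]
    constructor <;> rintro ⟨-, h⟩ <;> exact ⟨by decide, h⟩
  obtain ⟨c, hc⟩ := h6
  omega

open Triple in
/-- For a nice triple `T` and its iterates `T_0 = T`, `T_{k+1} = T_k ⊗ T_k`: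
`α(T_k) = α(T)+k`, `β(T_k) = 2^k·β(T)+2^k−1`, `δ(T_k) = 2^k·β(T)+α(T)+2^k+k−1`,
`g(T_k) = 2^k·g(T)`, `n(T_k) = 2^k·n(T)+((4^k−2^k)/2)·g(T)²`; moreover if
`g(T) = β(T)+1` then `g(T_k) = β(T_k)+1` for every `k`. -/
theorem iterT_params (T : Triple) (hT : Nice T) (k : ℕ) :
    alpha (iterT T k) = alpha T + k ∧
    beta (iterT T k) = 2 ^ k * beta T + 2 ^ k - 1 ∧
    delta (iterT T k) = 2 ^ k * beta T + alpha T + 2 ^ k + k - 1 ∧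
    gT (iterT T k) = 2 ^ k * gT T ∧
    nT (iterT T k) = 2 ^ k * nT T + (4 ^ k - 2 ^ k) / 2 * gT T ^ 2 ∧
    (gT T = beta T + 1 → gT (iterT T k) = beta (iterT T k) + 1) := by
  induction k with
  | zero =>
    simp [iterT, delta, alpha, beta]
    omega
  | succ k ih =>
    obtain ⟨ha, hb, hd, hg, hn, hgb⟩ := ih
    have hc := compound_params (iterT T k) (iterT T k)
    obtain ⟨ca, cb, cg, cn⟩ := hc
    have hp : (1:ℕ) ≤ 2^k := Nat.one_le_two_pow
    have hsq := pow_sq_two k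
    have hhalf := halve_step k
    have ha' : alpha (iterT T (k+1)) = alpha T + (k+1) := by
      show alpha (compound (iterT T k) (iterT T k)) = _
      rw [ca, ha]; ring
    have hb' : beta (iterT T (k+1)) = 2^(k+1) * beta T + 2^(k+1) - 1 := by
      show beta (compound (iterT T k) (iterT T k)) = _
      rw [cb, hb]
      have e1 : (2:ℕ)^(k+1) * beta T = 2 * (2^k * beta T) := by ring
      have e2 : (2:ℕ)^(k+1) = 2 * 2^k := by ring
      rw [e1, e2]
      generalize 2^k * beta T = m
      omega
    have hg' : gT (iterT T (k+1)) = 2^(k+1) * gT T := by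
      show gT (compound (iterT T k) (iterT T k)) = _
      rw [cg, hg]; ring
    have hn' : nT (iterT T (k+1)) = 2^(k+1) * nT T + (4^(k+1) - 2^(k+1)) / 2 * gT T ^ 2 := by
      show nT (compound (iterT T k) (iterT T k)) = _
      rw [cn, hn, hg, hhalf]
      have : 2^k * gT T * (2^k * gT T) = 4^k * gT T ^ 2 := by
        rw [← hsq]; ring
      rw [this]; ring
    refine ⟨ha', hb', ?_, hg', hn', ?_⟩
    · have : delta (iterT T (k+1)) = alpha (iterT T (k+1)) + beta (iterT T (k+1)) := by
        cases k <;> rfl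
      rw [this, ha', hb']
      have hp' : (1:ℕ) ≤ 2^(k+1) := Nat.one_le_two_pow
      generalize 2^(k+1) * beta T = m
      omega
    · intro h
      rw [hg', hb', h]
      have : (2:ℕ)^(k+1) * (beta T + 1) = 2^(k+1) * beta T + 2^(k+1) := by ring
      rw [this]
      have hp' : (1:ℕ) ≤ 2^(k+1) := Nat.one_le_two_pow
      omega
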